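/- arXiv:2108.07762 — 7 statements merged into one kernel-verified Lean document; each statement's English description precedes it below -/
import Mathlib

section
/- Let n ≥ 0 and let γ ≥ 0, μ₀ ≥ 0 with γ + μ₀ > 0, η ≥ 0, and μⱼ > 0, ηⱼ > 0 for j = 1,…,n, and let K > 0 (K = 3I₀G/R⁵). Define the complex Love number of the generalized Maxwell rheology by k(σ) = K / (γ + J⁻¹(σ)), where J⁻¹(σ) = μ₀ + iησ + Σ_{j=1}^n iσηⱼμⱼ/(μⱼ + iσηⱼ) for σ ∈ ℝ (so J⁻¹(0) = μ₀). Then for every σ ∈ ℝ one has |k(σ)| ≤ |k(0)| = K/(γ + μ₀). -/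
/-! The real part of `γ + J⁻¹(σ)` is at least `γ + μ₀ = γ + J⁻¹(0)`: the dashpot term `iησ` is
purely imaginary, and each Maxwell term `zμ/(μ + z)` with `z = iσηⱼ` has real part
`μ(μ Re z + |z|²)/|μ + z|² ≥ 0`. Since `|w| ≥ Re w`, the modulus of
`k(σ) = K/(γ + J⁻¹(σ))` is largest at `σ = 0`. -/

open Complex

theorem re_mul_ofReal_div_ofReal_add_nonneg {z : ℂ} {μ : ℝ} (hz : 0 ≤ z.re) (hμ : 0 ≤ μ) :
    0 ≤ (z * μ / (μ + z)).re := by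
  rw [div_re, ← add_div]
  refine div_nonneg ?_ (normSq_nonneg _)
  have hnum : (z * μ).re * (μ + z).re + (z * μ).im * (μ + z).im
      = μ * (μ * z.re + normSq z) := by
    simp only [mul_re, mul_im, add_re, add_im, ofReal_re, ofReal_im, normSq_apply]
    ring
  rw [hnum]
  have := normSq_nonneg z
  positivity

theorem le_re_generalizedMaxwell_rigidity {ι : Type*} (s : Finset ι) (μ₀ η σ : ℝ)
    (μs ηs : ι → ℝ) (hμs : ∀ j ∈ s, 0 ≤ μs j) :
    μ₀ ≤ ((μ₀ : ℂ) + I * η * σ + ∑ j ∈ s, I * σ * ηs j * μs j / ((μs j : ℂ) + I * σ * ηs j)).re := by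
  have hmaxwell : 0 ≤ (∑ j ∈ s, I * σ * ηs j * μs j / ((μs j : ℂ) + I * σ * ηs j)).re := by
    rw [re_sum]
    refine Finset.sum_nonneg fun j hj => re_mul_ofReal_div_ofReal_add_nonneg ?_ (hμs j hj)
    simp
  have hdashpot : (I * η * σ).re = 0 := by simp
  simpa [hdashpot] using hmaxwell

theorem norm_ofReal_div_le_of_le_re {K c : ℝ} {w : ℂ} (hK : 0 ≤ K) (hc : 0 < c) (h : c ≤ w.re) :
    ‖(K : ℂ) / w‖ ≤ K / c := by
  rw [norm_div, norm_real, Real.norm_of_nonneg hK]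
  exact div_le_div_of_nonneg_left hK hc (h.trans (re_le_norm w))

theorem stmt_0_general (n : ℕ) (γ μ₀ η K : ℝ) (μs ηs : Fin n → ℝ)
    (hγμ₀ : 0 < γ + μ₀)
    (hμs : ∀ j, 0 < μs j) (hK : 0 < K)
    (Jinv : ℝ → ℂ)
    (hJinv : ∀ σ : ℝ, Jinv σ =
      (μ₀ : ℂ) + Complex.I * η * σ +
        ∑ j, Complex.I * σ * ηs j * μs j / ((μs j : ℂ) + Complex.I * σ * ηs j))
    (k : ℝ → ℂ) (hk : ∀ σ : ℝ, k σ = K / ((γ : ℂ) + Jinv σ)) :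
    (∀ σ : ℝ, ‖k σ‖ ≤ ‖k 0‖) ∧
      ‖k 0‖ = K / (γ + μ₀) := by
  have hk0 : ‖k 0‖ = K / (γ + μ₀) := by
    rw [hk, hJinv, show (γ : ℂ) + _ = ((γ + μ₀ : ℝ) : ℂ) by simp, ← ofReal_div, norm_real,
      Real.norm_of_nonneg (div_pos hK hγμ₀).le]
  refine ⟨fun σ => ?_, hk0⟩
  rw [hk0, hk]
  refine norm_ofReal_div_le_of_le_re hK.le hγμ₀ ?_
  have := le_re_generalizedMaxwell_rigidity Finset.univ μ₀ η σ μs ηs fun j _ => (hμs j).le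
  rw [add_re, ofReal_re, hJinv]
  linarith

/-- For the generalized Maxwell rheology with self-gravity `γ`,
prestress spring `μ₀`, dashpot `η`, Maxwell elements `(μs j, ηs j)` and constant
`K = 3I₀G/R⁵`, the complex Love number `k(σ) = K / (γ + J⁻¹(σ))` satisfies
`|k(σ)| ≤ |k(0)| = K/(γ+μ₀)` for every real frequency `σ`. -/
theorem stmt_0 (n : ℕ) (γ μ₀ η K : ℝ) (μs ηs : Fin n → ℝ)
    (hγ : 0 ≤ γ) (hμ₀ : 0 ≤ μ₀) (hγμ₀ : 0 < γ + μ₀) (hη : 0 ≤ η)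
    (hμs : ∀ j, 0 < μs j) (hηs : ∀ j, 0 < ηs j) (hK : 0 < K)
    (Jinv : ℝ → ℂ)
    (hJinv : ∀ σ : ℝ, Jinv σ =
      (μ₀ : ℂ) + Complex.I * η * σ +
        ∑ j, Complex.I * σ * ηs j * μs j / ((μs j : ℂ) + Complex.I * σ * ηs j))
    (k : ℝ → ℂ) (hk : ∀ σ : ℝ, k σ = K / ((γ : ℂ) + Jinv σ)) :
    (∀ σ : ℝ, ‖k σ‖ ≤ ‖k 0‖) ∧
      ‖k 0‖ = K / (γ + μ₀) :=
  stmt_0_general n γ μ₀ η K μs ηs hγμ₀ hμs hK Jinv hJinv k hk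
end

section
/- Let n ≥ 1 and let γ ≥ 0, μ₀ ≥ 0 with γ + μ₀ > 0, μ₁ > 0, η₁ > 0, and μⱼ > 0, ηⱼ > 0 for j = 2,…,n, and let K > 0. Define, for real σ ≠ 0, the complex compliance J_V(σ) = 1/μ₁ + 1/(iση₁) + Σ_{j=2}^n 1/(μⱼ + iσηⱼ) and the complex Love number k(σ) = K/(γ + μ₀ + J_V(σ)⁻¹). Then J_V(σ) ≠ 0 for all real σ ≠ 0, and |k(σ)| ≤ K/(γ + μ₀) for every real σ ≠ 0, where K/(γ + μ₀) is the value k(0) obtained in the limit σ → 0. -/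
/-!
The compliance `J_V(σ)` has positive real part: the spring term `1/μ₁` is positive, the dashpot
term `1/(iση₁)` is purely imaginary, and each Kelvin–Voigt term `1/(μⱼ + iσηⱼ)` has real part
`μⱼ/|μⱼ + iσηⱼ|² ≥ 0`. Inversion preserves the sign of the real part, so
`Re(γ + μ₀ + J_V(σ)⁻¹) ≥ γ + μ₀`, which bounds the modulus of the denominator of `k(σ)` from below.
-/

open Complex

namespace Complex

lemma inv_re_nonneg {z : ℂ} (hz : 0 ≤ z.re) : 0 ≤ z⁻¹.re := by
  rw [inv_re]
  exact div_nonneg hz (normSq_nonneg z)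

lemma re_one_div_I_mul_ofReal (x : ℝ) : (1 / (I * x)).re = 0 := by
  simp [inv_re]

end Complex

noncomputable def voigtCompliance {ι : Type*} [Fintype ι] (μ₁ η₁ : ℝ) (μs ηs : ι → ℝ) (σ : ℝ) :
    ℂ :=
  1 / (μ₁ : ℂ) + 1 / (I * σ * η₁) + ∑ j, 1 / ((μs j : ℂ) + I * σ * ηs j)

lemma voigtCompliance_re_pos {ι : Type*} [Fintype ι] {μ₁ : ℝ} (η₁ : ℝ) {μs : ι → ℝ}
    (ηs : ι → ℝ) (σ : ℝ) (hμ₁ : 0 < μ₁) (hμs : ∀ j, 0 ≤ μs j) :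
    0 < (voigtCompliance μ₁ η₁ μs ηs σ).re := by
  have spring : (1 / (μ₁ : ℂ)).re = μ₁⁻¹ := by
    rw [one_div, ← ofReal_inv, ofReal_re]
  have dashpot : (1 / (I * σ * η₁)).re = 0 := by
    rw [mul_assoc, ← ofReal_mul, re_one_div_I_mul_ofReal]
  have kelvinVoigt : 0 ≤ (∑ j, 1 / ((μs j : ℂ) + I * σ * ηs j)).re := by
    rw [re_sum]
    refine Finset.sum_nonneg fun j _ => ?_
    rw [one_div]
    exact inv_re_nonneg (by simpa using hμs j)
  rw [voigtCompliance, add_re, add_re, spring, dashpot, add_zero]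
  exact add_pos_of_pos_of_nonneg (inv_pos.2 hμ₁) kelvinVoigt

lemma norm_ofReal_div_add_inv_le {K c : ℝ} {J : ℂ} (hK : 0 ≤ K) (hc : 0 < c) (hJ : 0 ≤ J.re) :
    ‖(K : ℂ) / (c + J⁻¹)‖ ≤ K / c := by
  have hre : c ≤ (c + J⁻¹ : ℂ).re := by
    rw [add_re, ofReal_re]
    exact le_add_of_nonneg_right (inv_re_nonneg hJ)
  rw [norm_div, norm_real, Real.norm_of_nonneg hK]
  exact div_le_div_of_nonneg_left hK hc (hre.trans (re_le_norm _))

theorem stmt_1_general (n : ℕ) (γ μ₀ μ₁ η₁ K : ℝ) (μs ηs : Fin (n - 1) → ℝ)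
    (hγμ₀ : 0 < γ + μ₀) (hμ₁ : 0 < μ₁)
    (hμs : ∀ j, 0 < μs j) (hK : 0 < K)
    (JV : ℝ → ℂ)
    (hJV : ∀ σ : ℝ, σ ≠ 0 → JV σ =
      1 / (μ₁ : ℂ) + 1 / (Complex.I * σ * η₁) +
        ∑ j, 1 / ((μs j : ℂ) + Complex.I * σ * ηs j))
    (k : ℝ → ℂ) (hk : ∀ σ : ℝ, σ ≠ 0 → k σ = K / ((γ : ℂ) + μ₀ + (JV σ)⁻¹)) :
    ∀ σ : ℝ, σ ≠ 0 → JV σ ≠ 0 ∧ ‖k σ‖ ≤ K / (γ + μ₀) := by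
  intro σ hσ
  have hre : 0 < (JV σ).re := by
    rw [hJV σ hσ]
    exact voigtCompliance_re_pos η₁ ηs σ hμ₁ fun j => (hμs j).le
  refine ⟨fun h => by simp [h] at hre, ?_⟩
  rw [hk σ hσ, ← ofReal_add]
  exact norm_ofReal_div_add_inv_le hK.le hγμ₀ hre.le

/-- For the generalized Voigt rheology with prestress (springs `γ`, `μ₀`,
a Maxwell element `(μ₁, η₁)` in series with Kelvin–Voigt elements `(μs j, ηs j)`, `j = 2,…,n`),
the compliance `J_V(σ)` is nonzero for `σ ≠ 0` and the Love number
`k(σ) = K/(γ + μ₀ + J_V(σ)⁻¹)` satisfies `|k(σ)| ≤ K/(γ+μ₀) = k(0)`. -/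
theorem stmt_1 (n : ℕ) (hn : 1 ≤ n) (γ μ₀ μ₁ η₁ K : ℝ) (μs ηs : Fin (n - 1) → ℝ)
    (hγ : 0 ≤ γ) (hμ₀ : 0 ≤ μ₀) (hγμ₀ : 0 < γ + μ₀) (hμ₁ : 0 < μ₁) (hη₁ : 0 < η₁)
    (hμs : ∀ j, 0 < μs j) (hηs : ∀ j, 0 < ηs j) (hK : 0 < K)
    (JV : ℝ → ℂ)
    (hJV : ∀ σ : ℝ, σ ≠ 0 → JV σ =
      1 / (μ₁ : ℂ) + 1 / (Complex.I * σ * η₁) +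
        ∑ j, 1 / ((μs j : ℂ) + Complex.I * σ * ηs j))
    (k : ℝ → ℂ) (hk : ∀ σ : ℝ, σ ≠ 0 → k σ = K / ((γ : ℂ) + μ₀ + (JV σ)⁻¹)) :
    ∀ σ : ℝ, σ ≠ 0 → JV σ ≠ 0 ∧ ‖k σ‖ ≤ K / (γ + μ₀) :=
  stmt_1_general n γ μ₀ μ₁ η₁ K μs ηs hγμ₀ hμ₁ hμs hK JV hJV k hk
end

section
/- Let f₀ > 0 be real and let y, z ∈ ℂ satisfy Re y > 0, Re z > 0, Im y ≥ 0 and Im z ≥ 0. Then every complex root x of the quadratic equation x² − (1 + f₀)(y + z)x + (1 + f₀)yz = 0 satisfies Re x > 0 and Im x ≥ 0. -/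
set_option maxHeartbeats 1000000


/-- If `f₀ > 0` and `y, z ∈ ℂ` have positive real part and nonnegative
imaginary part, then every root `x` of `x² − (1+f₀)(y+z)x + (1+f₀)yz = 0` has
positive real part and nonnegative imaginary part. -/
theorem stmt_2 (f₀ : ℝ) (hf₀ : 0 < f₀) (y z x : ℂ)
    (hyr : 0 < y.re) (hzr : 0 < z.re) (hyi : 0 ≤ y.im) (hzi : 0 ≤ z.im)
    (hx : x ^ 2 - (1 + (f₀ : ℂ)) * (y + z) * x + (1 + (f₀ : ℂ)) * y * z = 0) :
    0 < x.re ∧ 0 ≤ x.im := by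
  by_contra hbad
  push_neg at hbad
  -- x ≠ 0
  have hy0 : y ≠ 0 := fun h => by simp [h] at hyr
  have hz0 : z ≠ 0 := fun h => by simp [h] at hzr
  have hx0 : x ≠ 0 := by
    rintro rfl
    have ha : (1:ℂ) + f₀ ≠ 0 := by
      intro h
      have := congrArg Complex.re h
      simp at this
      linarith
    simp [ha, hy0, hz0] at hx
  set u : ℂ := (x - y) * (starRingEnd ℂ) x with hu_def
  set v : ℂ := (x - z) * (starRingEnd ℂ) x with hv_def
  have hnx : 0 < Complex.normSq x := Complex.normSq_pos.mpr hx0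
  have E : ((1:ℂ) + f₀) * (u * v) = (f₀:ℂ) * ((Complex.normSq x : ℝ) : ℂ) ^ 2 := by
    rw [hu_def, hv_def]
    linear_combination ((starRingEnd ℂ) x) ^ 2 * hx +
      (f₀:ℂ) * (x * (starRingEnd ℂ) x + ((Complex.normSq x : ℝ) : ℂ)) * (Complex.mul_conj x)
  -- key real identity
  have E2 : ((1:ℂ) + f₀) * ((Complex.normSq u : ℝ) : ℂ) * v
      = (f₀:ℂ) * ((Complex.normSq x : ℝ) : ℂ) ^ 2 * (starRingEnd ℂ) u := by
    linear_combination ((starRingEnd ℂ) u) * E - ((1:ℂ) + f₀) * v * (Complex.mul_conj u)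
  have key : (1 + f₀) * Complex.normSq u * v.im
      = - (f₀ * (Complex.normSq x) ^ 2 * u.im) := by
    have := congrArg Complex.im E2
    simpa [← Complex.ofReal_pow, Complex.add_im, Complex.mul_im, Complex.mul_re, Complex.ofReal_re,
      Complex.ofReal_im, Complex.conj_im, Complex.conj_re] using this
  -- component formulas
  have hui : u.im = y.re * x.im - y.im * x.re := by
    simp [hu_def, Complex.mul_im, Complex.sub_re, Complex.sub_im]; ring
  have hvi : v.im = z.re * x.im - z.im * x.re := by
    simp [hv_def, Complex.mul_im, Complex.sub_re, Complex.sub_im]; ring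
  have hur : u.re = Complex.normSq x - (y.re * x.re + y.im * x.im) := by
    simp [hu_def, Complex.mul_re, Complex.sub_re, Complex.sub_im, Complex.normSq_apply]; ring
  have hvr : v.re = Complex.normSq x - (z.re * x.re + z.im * x.im) := by
    simp [hv_def, Complex.mul_re, Complex.sub_re, Complex.sub_im, Complex.normSq_apply]; ring
  have hnsqu : Complex.normSq u = u.re ^ 2 + u.im ^ 2 := by
    rw [Complex.normSq_apply]; ring
  have hnsqv : Complex.normSq v = v.re ^ 2 + v.im ^ 2 := by
    rw [Complex.normSq_apply]; ring
  have EN : (1 + f₀) ^ 2 * (Complex.normSq u * Complex.normSq v)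
      = f₀ ^ 2 * ((Complex.normSq x) ^ 2) ^ 2 := by
    have h := congrArg Complex.normSq E
    have hn1 : Complex.normSq (1 + (f₀:ℂ)) = (1 + f₀) ^ 2 := by
      simp [Complex.normSq_apply]; ring
    simp only [Complex.normSq_mul, ← Complex.ofReal_pow, Complex.normSq_ofReal] at h
    rw [hn1] at h
    linear_combination h
  clear_value u v
  clear hu_def hv_def E E2
  -- Case C1 : x.re ≤ 0, 0 < x.im
  have C1 : x.re ≤ 0 → 0 < x.im → False := by
    intro hp hq
    have h1 : 0 < u.im := by rw [hui]; nlinarith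
    have h2 : 0 < v.im := by rw [hvi]; nlinarith
    have h3 : 0 < Complex.normSq u := by
      rw [hnsqu]; nlinarith [sq_nonneg u.re, mul_pos h1 h1]
    have hA : (0:ℝ) < 1 + f₀ := by linarith
    have h4 : 0 < (1 + f₀) * Complex.normSq u * v.im := mul_pos (mul_pos hA h3) h2
    have h5 : 0 < f₀ * (Complex.normSq x) ^ 2 * u.im :=
      mul_pos (mul_pos hf₀ (pow_pos hnx 2)) h1
    linarith [key]
  -- Case C2 : x.im < 0, 0 ≤ x.re
  have C2 : x.im < 0 → 0 ≤ x.re → False := by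
    intro hq hp
    have h1 : u.im < 0 := by rw [hui]; nlinarith
    have h2 : v.im < 0 := by rw [hvi]; nlinarith
    have h3 : 0 < Complex.normSq u := by
      rw [hnsqu]; nlinarith [sq_nonneg u.re, mul_pos_of_neg_of_neg h1 h1]
    have hA : (0:ℝ) < 1 + f₀ := by linarith
    have h4 : (1 + f₀) * Complex.normSq u * v.im < 0 :=
      mul_neg_of_pos_of_neg (mul_pos hA h3) h2
    have h5 : 0 < f₀ * (Complex.normSq x) ^ 2 * (-u.im) :=
      mul_pos (mul_pos hf₀ (pow_pos hnx 2)) (by linarith)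
    nlinarith [key]
  -- Case C3 : x.re < 0, x.im ≤ 0
  have C3 : x.re < 0 → x.im ≤ 0 → False := by
    intro hp hq
    have hry : y.re * x.re + y.im * x.im < 0 := by nlinarith
    have hrz : z.re * x.re + z.im * x.im < 0 := by nlinarith
    have hure : Complex.normSq x < u.re := by rw [hur]; linarith
    have hvre : Complex.normSq x < v.re := by rw [hvr]; linarith
    have hugt : (Complex.normSq x) ^ 2 < Complex.normSq u := by
      rw [hnsqu]; nlinarith [sq_nonneg u.im]
    have hvgt : (Complex.normSq x) ^ 2 < Complex.normSq v := by
      rw [hnsqv]; nlinarith [sq_nonneg v.im]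
    have hnx2 : 0 < (Complex.normSq x) ^ 2 := pow_pos hnx 2
    have hApos : (0:ℝ) < (1 + f₀) ^ 2 := by positivity
    have s1 : ((Complex.normSq x) ^ 2) ^ 2 < Complex.normSq u * Complex.normSq v := by
      nlinarith [mul_lt_mul'' hugt hvgt hnx2.le hnx2.le]
    have s2 := mul_lt_mul_of_pos_left s1 hApos
    have s3 : f₀ ^ 2 * ((Complex.normSq x) ^ 2) ^ 2
        < (1 + f₀) ^ 2 * ((Complex.normSq x) ^ 2) ^ 2 := by
      nlinarith [pow_pos hnx2 2]
    linarith [s2, s3, EN]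
  -- case split
  rcases le_or_gt x.re 0 with hp | hp
  · rcases lt_trichotomy x.im 0 with hq | hq | hq
    · rcases lt_or_eq_of_le hp with hp' | hp'
      · exact C3 hp' hq.le
      · exact C2 hq (le_of_eq hp'.symm)
    · rcases lt_or_eq_of_le hp with hp' | hp'
      · exact C3 hp' hq.le
      · exact hx0 (Complex.ext (by simpa using hp') (by simpa using hq))
    · exact C1 hp hq
  · exact C2 (hbad hp) hp.le
end

section
/- Let I_e, I₃ > 0 and s, ψ̇, θ, ω ∈ ℝ with ω ≠ 0. Define I = diag(I_e, I_e, I₃), J₀ = sω²·diag(1, 1, 0), R(t) = R₃(ψ̇t)·R₁(θ)·R₃(−ψ̇t·cos θ)·R₃(ωt), ω̂(t) = R′(t)·R(t)⁻¹ with angular velocity vector ω⃗(t) the unique vector whose hat map is ω̂(t), I_t(t) = R(t)·I·R(t)ᵀ and π(t) = I_t(t)·ω⃗(t). If (s·(I₃ − I_e)/I₃ − (I_e/I₃)·(ψ̇²/ω²))·cos θ + ψ̇/ω = 0, then for all t: hat(π′(t)) = I_t(t)·J₀ − J₀·I_t(t), i.e. R(t) is a solution of the rigid-body Euler equation with constant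 tidal-force matrix J₀. -/
open Matrix

noncomputable section

/-- The hat map, sending `x ∈ ℝ³` to the antisymmetric matrix `x̂` with `x̂ y = x × y`. -/
def hat (x : Fin 3 → ℝ) : Matrix (Fin 3) (Fin 3) ℝ :=
  !![0, -x 2, x 1; x 2, 0, -x 0; -x 1, x 0, 0]

/-- The check map, inverse of the hat map on antisymmetric matrices. -/
def check3 (A : Matrix (Fin 3) (Fin 3) ℝ) : Fin 3 → ℝ := ![A 2 1, A 0 2, A 1 0]

/-- Rotation matrix about the first coordinate axis. -/
def R1 (θ : ℝ) : Matrix (Fin 3) (Fin 3) ℝ :=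
  !![1, 0, 0; 0, Real.cos θ, -Real.sin θ; 0, Real.sin θ, Real.cos θ]

/-- Rotation matrix about the third coordinate axis. -/
def R3 (θ : ℝ) : Matrix (Fin 3) (Fin 3) ℝ :=
  !![Real.cos θ, -Real.sin θ, 0; Real.sin θ, Real.cos θ, 0; 0, 0, 1]

/-- The precessing guiding motion `R(t) = R₃(ψ̇t) R₁(θ) R₃(−ψ̇t cos θ) R₃(ωt)`. -/
def Rg (ψd θ ω t : ℝ) : Matrix (Fin 3) (Fin 3) ℝ :=
  R3 (ψd * t) * R1 θ * R3 (-(ψd * t * Real.cos θ)) * R3 (ω * t)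

/-- Entrywise derivative `R′(t)` of the guiding motion. -/
def Rgdot (ψd θ ω t : ℝ) : Matrix (Fin 3) (Fin 3) ℝ :=
  Matrix.of fun i j => deriv (fun s => Rg ψd θ ω s i j) t

/-- The angular velocity vector `ω⃗(t)`, the unique vector whose hat map is
`ω̂(t) = R′(t)R(t)⁻¹`. -/
def omegaVec (ψd θ ω t : ℝ) : Fin 3 → ℝ :=
  check3 (Rgdot ψd θ ω t * (Rg ψd θ ω t)⁻¹)

/-- The moment of inertia in the inertial frame, `I_t(t) = R(t)·diag(I_e,I_e,I₃)·R(t)ᵀ`. -/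
def It (Ie I3 ψd θ ω t : ℝ) : Matrix (Fin 3) (Fin 3) ℝ :=
  Rg ψd θ ω t * Matrix.diagonal ![Ie, Ie, I3] * (Rg ψd θ ω t)ᵀ

/-- The angular momentum `π(t) = I_t(t)·ω⃗(t)`. -/
def piVec (Ie I3 ψd θ ω t : ℝ) : Fin 3 → ℝ :=
  It Ie I3 ψd θ ω t *ᵥ omegaVec ψd θ ω t

/-- The time derivative `π′(t)` of the angular momentum, componentwise. -/
def piDot (Ie I3 ψd θ ω t : ℝ) : Fin 3 → ℝ :=
  fun i => deriv (fun s => piVec Ie I3 ψd θ ω s i) t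

/-!
Write `R(t) = R₃(ψ̇t) R₁(θ) R₃(bt)` with `b = ω − ψ̇ cos θ`, and let `n(t) = R(t) e₃` be the
symmetry axis in the inertial frame. Axisymmetry gives `I_t = I_e·1 + (I₃ − I_e) n nᵀ`, and
`R′ = ψ̇ ê₃ R + b R ê₃` together with `M x̂ Mᵀ = (Mx)^` for rotations gives `ω⃗ = ψ̇ e₃ + b n`.
As `n·e₃ = cos θ` and `n·ω⃗ = ω`, the angular momentum is
`π = I_e ψ̇ e₃ + (I₃ω − I_e ψ̇ cos θ) n`, and `n′ = ψ̇ e₃ × n`. Hence both sides of the Euler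
equation are multiples of `(e₃ × n)^ = n e₃ᵀ − e₃ nᵀ`, with coefficients
`ψ̇ (I₃ω − I_e ψ̇ cos θ)` and `−sω² (I₃ − I_e) cos θ`, which agree exactly under the precession
condition.
-/

def HasEntrywiseDerivAt {𝕜 m n : Type*} [NontriviallyNormedField 𝕜] (f : 𝕜 → Matrix m n 𝕜)
    (f' : Matrix m n 𝕜) (x : 𝕜) : Prop :=
  ∀ i j, HasDerivAt (fun t => f t i j) (f' i j) x

namespace HasEntrywiseDerivAt

variable {𝕜 l m n : Type*} [NontriviallyNormedField 𝕜] {x : 𝕜}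

theorem mul [Fintype m] {f : 𝕜 → Matrix l m 𝕜} {g : 𝕜 → Matrix m n 𝕜} {f' : Matrix l m 𝕜}
    {g' : Matrix m n 𝕜} (hf : HasEntrywiseDerivAt f f' x) (hg : HasEntrywiseDerivAt g g' x) :
    HasEntrywiseDerivAt (fun t => f t * g t) (f' * g x + f x * g') x := by
  intro i j
  simp only [mul_apply, Matrix.add_apply, ← Finset.sum_add_distrib]
  exact HasDerivAt.fun_sum fun k _ => (hf i k).fun_mul (hg k j)

theorem mulVec_apply [Fintype m] {f : 𝕜 → Matrix l m 𝕜} {f' : Matrix l m 𝕜}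
    (hf : HasEntrywiseDerivAt f f' x) (v : m → 𝕜) (i : l) :
    HasDerivAt (fun t => (f t *ᵥ v) i) ((f' *ᵥ v) i) x := by
  simp only [Matrix.mulVec, dotProduct]
  exact HasDerivAt.fun_sum fun k _ => (hf i k).mul_const (v k)

theorem deriv_eq {f : 𝕜 → Matrix m n 𝕜} {f' : Matrix m n 𝕜} (hf : HasEntrywiseDerivAt f f' x) :
    Matrix.of (fun i j => deriv (fun t => f t i j) x) = f' :=
  Matrix.ext fun i j => (hf i j).deriv

end HasEntrywiseDerivAt

theorem hasEntrywiseDerivAt_const {𝕜 m n : Type*} [NontriviallyNormedField 𝕜]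
    (M : Matrix m n 𝕜) (x : 𝕜) : HasEntrywiseDerivAt (fun _ => M) 0 x :=
  fun i j => hasDerivAt_const x (M i j)

theorem commutator_smul_one_add_smul_vecMulVec {n R : Type*} [Fintype n] [DecidableEq n]
    [CommRing R] (a c d : R) (u v : n → R) :
    (a • 1 + c • vecMulVec u u) * (d • (1 - vecMulVec v v))
        - (d • (1 - vecMulVec v v)) * (a • 1 + c • vecMulVec u u)
      = (c * d * (u ⬝ᵥ v)) • (vecMulVec v u - vecMulVec u v) := by
  simp only [Matrix.mul_sub, Matrix.sub_mul, Matrix.mul_add, Matrix.add_mul, Matrix.smul_mul,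
    Matrix.mul_smul, Matrix.one_mul, Matrix.mul_one, vecMulVec_mul_vecMulVec, vecMulVec_smul,
    dotProduct_comm v u, smul_smul]
  module

def e3 : Fin 3 → ℝ := ![0, 0, 1]

lemma hat_add (u v : Fin 3 → ℝ) : hat (u + v) = hat u + hat v := by
  ext i j; fin_cases i <;> fin_cases j <;> simp [hat] <;> ring

lemma hat_smul (c : ℝ) (v : Fin 3 → ℝ) : hat (c • v) = c • hat v := by
  ext i j; fin_cases i <;> fin_cases j <;> simp [hat]

lemma hat_mulVec (u v : Fin 3 → ℝ) : hat u *ᵥ v = u ⨯₃ v := by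
  ext i; fin_cases i <;> simp [hat, cross_apply, mulVec, dotProduct, Fin.sum_univ_three] <;> ring

lemma hat_cross (u v : Fin 3 → ℝ) : hat (u ⨯₃ v) = vecMulVec v u - vecMulVec u v := by
  ext i j; fin_cases i <;> fin_cases j <;> simp [hat, cross_apply, vecMulVec_apply] <;> ring

lemma check3_hat (v : Fin 3 → ℝ) : check3 (hat v) = v := by
  ext i; fin_cases i <;> simp [check3, hat]

def HatEquivariant (M : Matrix (Fin 3) (Fin 3) ℝ) : Prop :=
  ∀ v, M * hat v * Mᵀ = hat (M *ᵥ v)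

lemma HatEquivariant.mul {M N : Matrix (Fin 3) (Fin 3) ℝ} (hM : HatEquivariant M)
    (hN : HatEquivariant N) : HatEquivariant (M * N) := by
  intro v
  rw [transpose_mul, ← mulVec_mulVec, ← hM, ← hN]
  simp only [Matrix.mul_assoc]

lemma diagonal_eq_smul_one_add_smul_vecMulVec (p q : ℝ) :
    diagonal ![p, p, q] = p • (1 : Matrix (Fin 3) (Fin 3) ℝ) + (q - p) • vecMulVec e3 e3 := by
  ext i j; fin_cases i <;> fin_cases j <;> simp [e3]

lemma R3_add (x y : ℝ) : R3 (x + y) = R3 x * R3 y := by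
  ext i j
  fin_cases i <;> fin_cases j <;>
    simp [R3, mul_apply, Fin.sum_univ_three, Real.cos_add, Real.sin_add] <;> ring

lemma R3_mem_orthogonalGroup (x : ℝ) : R3 x ∈ orthogonalGroup (Fin 3) ℝ := by
  rw [mem_orthogonalGroup_iff]
  ext i j
  fin_cases i <;> fin_cases j <;> simp [R3, mul_apply, Fin.sum_univ_three, one_apply] <;>
    grind [Real.sin_sq_add_cos_sq]

lemma R1_mem_orthogonalGroup (x : ℝ) : R1 x ∈ orthogonalGroup (Fin 3) ℝ := by
  rw [mem_orthogonalGroup_iff]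
  ext i j
  fin_cases i <;> fin_cases j <;> simp [R1, mul_apply, Fin.sum_univ_three, one_apply] <;>
    grind [Real.sin_sq_add_cos_sq]

lemma R3_hatEquivariant (x : ℝ) : HatEquivariant (R3 x) := by
  intro v
  ext i j
  fin_cases i <;> fin_cases j <;>
    simp [R3, hat, mul_apply, mulVec, dotProduct, Fin.sum_univ_three] <;>
    grind [Real.sin_sq_add_cos_sq]

lemma R1_hatEquivariant (x : ℝ) : HatEquivariant (R1 x) := by
  intro v
  ext i j
  fin_cases i <;> fin_cases j <;>
    simp [R1, hat, mul_apply, mulVec, dotProduct, Fin.sum_univ_three] <;>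
    grind [Real.sin_sq_add_cos_sq]

lemma hat_e3_mul_R3 (x : ℝ) : hat e3 * R3 x = R3 x * hat e3 := by
  ext i j; fin_cases i <;> fin_cases j <;> simp [hat, e3, R3]

lemma R3_mulVec_e3 (x : ℝ) : R3 x *ᵥ e3 = e3 := by
  ext i; fin_cases i <;> simp [e3, R3]

lemma hasEntrywiseDerivAt_R3 (a t : ℝ) :
    HasEntrywiseDerivAt (fun s => R3 (a * s)) (a • (hat e3 * R3 (a * t))) t := by
  have hc : HasDerivAt (fun s => Real.cos (a * s)) (-(a * Real.sin (a * t))) t :=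
    ((hasDerivAt_id t).const_mul a).cos.congr_deriv (by simp; ring)
  have hs : HasDerivAt (fun s => Real.sin (a * s)) (a * Real.cos (a * t)) t :=
    ((hasDerivAt_id t).const_mul a).sin.congr_deriv (by simp; ring)
  intro i j
  fin_cases i <;> fin_cases j <;> simp [R3, hat, e3] <;>
    first | exact hc | exact hs | exact hs.neg | exact hasDerivAt_const _ _

section GuidingMotion

variable (Ie I3 ψd θ ω t : ℝ)

def symmAxis : Fin 3 → ℝ := R3 (ψd * t) *ᵥ (R1 θ *ᵥ e3)

lemma symmAxis_eq : symmAxis ψd θ t =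
    ![Real.sin θ * Real.sin (ψd * t), -(Real.sin θ * Real.cos (ψd * t)), Real.cos θ] := by
  ext i
  fin_cases i <;> simp [symmAxis, R3, R1, e3, mulVec, dotProduct, Fin.sum_univ_three] <;> ring

lemma symmAxis_dotProduct_e3 : symmAxis ψd θ t ⬝ᵥ e3 = Real.cos θ := by
  simp [symmAxis_eq, dotProduct, Fin.sum_univ_three, e3]

lemma symmAxis_dotProduct_self : symmAxis ψd θ t ⬝ᵥ symmAxis ψd θ t = 1 := by
  simp [symmAxis_eq, dotProduct, Fin.sum_univ_three]
  grind [Real.sin_sq_add_cos_sq]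

lemma hasDerivAt_symmAxis (i : Fin 3) :
    HasDerivAt (fun s => symmAxis ψd θ s i) ((ψd • (e3 ⨯₃ symmAxis ψd θ t)) i) t := by
  have h := (hasEntrywiseDerivAt_R3 ψd t).mulVec_apply (R1 θ *ᵥ e3) i
  rwa [smul_mulVec, ← mulVec_mulVec, hat_mulVec] at h

lemma Rg_eq : Rg ψd θ ω t = R3 (ψd * t) * R1 θ * R3 ((ω - ψd * Real.cos θ) * t) := by
  rw [Rg, Matrix.mul_assoc _ (R3 _), ← R3_add]
  ring_nf

lemma Rg_mem_orthogonalGroup : Rg ψd θ ω t ∈ orthogonalGroup (Fin 3) ℝ := by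
  rw [Rg_eq]
  exact mul_mem (mul_mem (R3_mem_orthogonalGroup _) (R1_mem_orthogonalGroup _))
    (R3_mem_orthogonalGroup _)

lemma Rg_hatEquivariant : HatEquivariant (Rg ψd θ ω t) := by
  rw [Rg_eq]
  exact ((R3_hatEquivariant _).mul (R1_hatEquivariant _)).mul (R3_hatEquivariant _)

lemma Rg_mulVec_e3 : Rg ψd θ ω t *ᵥ e3 = symmAxis ψd θ t := by
  rw [Rg_eq, ← mulVec_mulVec, R3_mulVec_e3, ← mulVec_mulVec, symmAxis]

lemma Rgdot_eq : Rgdot ψd θ ω t =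
    ψd • (hat e3 * Rg ψd θ ω t) + (ω - ψd * Real.cos θ) • (Rg ψd θ ω t * hat e3) := by
  have h := ((hasEntrywiseDerivAt_R3 ψd t).mul (hasEntrywiseDerivAt_const (R1 θ) t)).mul
    (hasEntrywiseDerivAt_R3 (ω - ψd * Real.cos θ) t)
  rw [Rgdot, show Rg ψd θ ω = _ from funext (Rg_eq ψd θ ω), h.deriv_eq,
    hat_e3_mul_R3 ((ω - ψd * Real.cos θ) * t)]
  simp only [Matrix.mul_zero, add_zero, Matrix.smul_mul, Matrix.mul_smul, Matrix.mul_assoc]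

lemma omegaVec_eq :
    omegaVec ψd θ ω t = ψd • e3 + (ω - ψd * Real.cos θ) • symmAxis ψd θ t := by
  have hR := (mem_orthogonalGroup_iff _ _).1 (Rg_mem_orthogonalGroup ψd θ ω t)
  rw [omegaVec, inv_eq_right_inv hR, Rgdot_eq, Matrix.add_mul, Matrix.smul_mul, Matrix.smul_mul,
    Matrix.mul_assoc (hat e3), hR, Matrix.mul_one, Rg_hatEquivariant, Rg_mulVec_e3,
    ← hat_smul, ← hat_smul, ← hat_add, check3_hat]

lemma It_eq : It Ie I3 ψd θ ω t =
    Ie • 1 + (I3 - Ie) • vecMulVec (symmAxis ψd θ t) (symmAxis ψd θ t) := by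
  have hR := (mem_orthogonalGroup_iff _ _).1 (Rg_mem_orthogonalGroup ψd θ ω t)
  rw [It, diagonal_eq_smul_one_add_smul_vecMulVec, Matrix.mul_add, Matrix.add_mul,
    Matrix.mul_smul, Matrix.smul_mul, Matrix.mul_one, hR, Matrix.mul_smul, Matrix.smul_mul,
    mul_vecMulVec, vecMulVec_mul, vecMul_transpose, Rg_mulVec_e3]

lemma piVec_eq : piVec Ie I3 ψd θ ω t =
    (Ie * ψd) • e3 + (I3 * ω - Ie * ψd * Real.cos θ) • symmAxis ψd θ t := by
  rw [piVec, It_eq, omegaVec_eq, add_mulVec, smul_mulVec, smul_mulVec, one_mulVec,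
    vecMulVec_mulVec, dotProduct_add, dotProduct_smul, dotProduct_smul, symmAxis_dotProduct_e3,
    symmAxis_dotProduct_self, op_smul_eq_smul]
  module

lemma piDot_eq : piDot Ie I3 ψd θ ω t =
    (ψd * (I3 * ω - Ie * ψd * Real.cos θ)) • (e3 ⨯₃ symmAxis ψd θ t) := by
  funext i
  simp only [piDot, piVec_eq, Pi.add_apply, Pi.smul_apply, smul_eq_mul]
  exact (((hasDerivAt_symmAxis ψd θ t i).const_mul _).const_add _).deriv.trans (by simp; ring)

end GuidingMotion

theorem stmt_14_general (Ie I3 s ψd θ ω : ℝ) (hI3 : 0 < I3) (hω : ω ≠ 0)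
    (hcond : (s * (I3 - Ie) / I3 - (Ie / I3) * (ψd ^ 2 / ω ^ 2)) * Real.cos θ
      + ψd / ω = 0) :
    ∀ t : ℝ,
      hat (piDot Ie I3 ψd θ ω t) =
        It Ie I3 ψd θ ω t * ((s * ω ^ 2) • Matrix.diagonal ![1, 1, 0])
          - ((s * ω ^ 2) • Matrix.diagonal ![1, 1, 0]) * It Ie I3 ψd θ ω t := by
  intro t
  have hcoeff : ψd * (I3 * ω - Ie * ψd * Real.cos θ) = -((I3 - Ie) * (s * ω ^ 2) * Real.cos θ) := by
    field_simp at hcond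
    linear_combination hcond
  have hJ : (diagonal ![1, 1, 0] : Matrix (Fin 3) (Fin 3) ℝ) = 1 - vecMulVec e3 e3 := by
    rw [diagonal_eq_smul_one_add_smul_vecMulVec]
    module
  rw [piDot_eq, hat_smul, hat_cross, It_eq, hJ, commutator_smul_one_add_smul_vecMulVec,
    symmAxis_dotProduct_e3, hcoeff]
  module

/-- If the precession condition
`(s(I₃−I_e)/I₃ − (I_e/I₃)(ψ̇²/ω²))cos θ + ψ̇/ω = 0` holds, then the precessing guiding
motion solves the rigid-body Euler equation `π̂′ = [I_t, J₀]` with the constant tidal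
force matrix `J₀ = sω² diag(1,1,0)`. -/
theorem stmt_14 (Ie I3 s ψd θ ω : ℝ) (hIe : 0 < Ie) (hI3 : 0 < I3) (hω : ω ≠ 0)
    (hcond : (s * (I3 - Ie) / I3 - (Ie / I3) * (ψd ^ 2 / ω ^ 2)) * Real.cos θ
      + ψd / ω = 0) :
    ∀ t : ℝ,
      hat (piDot Ie I3 ψd θ ω t) =
        It Ie I3 ψd θ ω t * ((s * ω ^ 2) • Matrix.diagonal ![1, 1, 0])
          - ((s * ω ^ 2) • Matrix.diagonal ![1, 1, 0]) * It Ie I3 ψd θ ω t :=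
  stmt_14_general Ie I3 s ψd θ ω hI3 hω hcond

end
end

section
/- Let y, z ∈ ℂ with z ≠ 0 and let f₀ > 0 be real. Then f₀·(y + z)² + (y − z)² = 0 holds if and only if there exists ψ ∈ ℝ with cos(ψ/2) ≠ 0 such that y = e^{iψ}·z and f₀ = tan²(ψ/2). In particular, if the equation holds then |y| = |z|. -/
/-!
Writing `θ = ψ / 2`, the relation `y = e^{iψ} z` reads `y e^{-iθ} = e^{iθ} z`, i.e.
`cos θ (y - z) = i sin θ (y + z)`, and `f₀ = tan² θ` reads `f₀ cos² θ = sin² θ`; multiplying the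
discriminant `f₀ (y + z)² + (y - z)²` by `cos² θ` then gives
`sin² θ (y + z)² + (i sin θ (y + z))² = 0`. Conversely, with `u² = f₀` the discriminant factors as
`(y - z - i u (y + z)) (y - z + i u (y + z))`, and a root `y - z = i u (y + z)` is of the above
form for `θ = arctan u`.
-/

open Complex

lemma Complex.eq_exp_mul_I_mul_iff (ψ y z : ℂ) :
    y = exp (ψ * I) * z ↔ cos (ψ / 2) * (y - z) = sin (ψ / 2) * I * (y + z) := by
  have ha : exp (ψ / 2 * I) = cos (ψ / 2) + sin (ψ / 2) * I := exp_mul_I _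
  have hb : exp (-(ψ / 2) * I) = cos (ψ / 2) - sin (ψ / 2) * I := by
    rw [exp_mul_I, cos_neg, sin_neg]; ring
  have hab : exp (ψ / 2 * I) * exp (-(ψ / 2) * I) = 1 := by
    rw [← exp_add]; ring_nf; exact exp_zero
  have hsq : exp (ψ * I) = exp (ψ / 2 * I) * exp (ψ / 2 * I) := by rw [← exp_add]; ring_nf
  set a := exp (ψ / 2 * I)
  set b := exp (-(ψ / 2) * I)
  have hhalf : cos (ψ / 2) * (y - z) - sin (ψ / 2) * I * (y + z) = b * y - a * z := by
    linear_combination z * ha - y * hb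
  rw [hsq, ← sub_eq_zero, ← sub_eq_zero (a := cos (ψ / 2) * (y - z)), hhalf]
  constructor
  · intro h; linear_combination b * h + a * z * hab
  · intro h; linear_combination a * h - y * hab

lemma exists_sub_eq_mul_I_mul_add_of_discr_eq_zero {f : ℝ} (hf : 0 ≤ f) {y z : ℂ}
    (h : (f : ℂ) * (y + z) ^ 2 + (y - z) ^ 2 = 0) :
    ∃ u : ℝ, u ^ 2 = f ∧ y - z = u * I * (y + z) := by
  have hsqrt : ((√f : ℝ) : ℂ) ^ 2 = f := by exact_mod_cast Real.sq_sqrt hf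
  have hfactor : (y - z - √f * I * (y + z)) * (y - z + √f * I * (y + z)) = 0 := by
    linear_combination h + (y + z) ^ 2 * hsqrt - (√f * (y + z)) ^ 2 * I_sq
  rcases mul_eq_zero.mp hfactor with hroot | hroot
  · exact ⟨√f, Real.sq_sqrt hf, by linear_combination hroot⟩
  · exact ⟨-√f, by rw [neg_sq, Real.sq_sqrt hf], by push_cast; linear_combination hroot⟩

lemma exists_angle_of_discr_eq_zero {f : ℝ} (hf : 0 ≤ f) {y z : ℂ}
    (h : (f : ℂ) * (y + z) ^ 2 + (y - z) ^ 2 = 0) :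
    ∃ ψ : ℝ, Real.cos (ψ / 2) ≠ 0 ∧ y = exp (ψ * I) * z ∧ f = Real.tan (ψ / 2) ^ 2 := by
  obtain ⟨u, hu, hyz⟩ := exists_sub_eq_mul_I_mul_add_of_discr_eq_zero hf h
  have hsin : Real.sin (Real.arctan u) = u * Real.cos (Real.arctan u) := by
    rw [Real.sin_arctan, Real.cos_arctan]; ring
  have hhalf : 2 * Real.arctan u / 2 = Real.arctan u := by ring
  refine ⟨2 * Real.arctan u, by rw [hhalf]; exact (Real.cos_arctan_pos u).ne', ?_, by
    rw [hhalf, Real.tan_arctan, hu]⟩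
  rw [eq_exp_mul_I_mul_iff, ← ofReal_ofNat, ← ofReal_div, hhalf, ← ofReal_cos, ← ofReal_sin,
    hsin, hyz, ofReal_mul]
  ring

lemma discr_eq_zero_of_cos_mul_sub_eq {f c s y z : ℂ} (hc : c ≠ 0) (hf : f * c ^ 2 = s ^ 2)
    (h : c * (y - z) = s * I * (y + z)) : f * (y + z) ^ 2 + (y - z) ^ 2 = 0 := by
  refine (mul_eq_zero.mp ?_).resolve_left (pow_ne_zero 2 hc)
  linear_combination (y + z) ^ 2 * hf + (c * (y - z) + s * I * (y + z)) * h
    + (s * (y + z)) ^ 2 * I_sq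

lemma discr_eq_zero_of_eq_exp_mul_I_mul {f ψ : ℝ} {y z : ℂ} (hcos : Real.cos (ψ / 2) ≠ 0)
    (hy : y = exp (ψ * I) * z) (hf : f = Real.tan (ψ / 2) ^ 2) :
    (f : ℂ) * (y + z) ^ 2 + (y - z) ^ 2 = 0 := by
  have hcos' : ((Real.cos (ψ / 2) : ℝ) : ℂ) ≠ 0 := by exact_mod_cast hcos
  refine discr_eq_zero_of_cos_mul_sub_eq hcos' (s := Real.sin (ψ / 2)) ?_ ?_
  · rw [hf, Real.tan_eq_sin_div_cos, ofReal_pow, ofReal_div]; field_simp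
  · push_cast; exact (eq_exp_mul_I_mul_iff _ y z).mp hy

theorem stmt_16_general (y z : ℂ) (f₀ : ℝ) (hf₀ : 0 < f₀) :
    ((f₀ : ℂ) * (y + z) ^ 2 + (y - z) ^ 2 = 0 ↔
      ∃ ψ : ℝ, Real.cos (ψ / 2) ≠ 0 ∧ y = Complex.exp ((ψ : ℂ) * Complex.I) * z ∧
        f₀ = Real.tan (ψ / 2) ^ 2) ∧
      ((f₀ : ℂ) * (y + z) ^ 2 + (y - z) ^ 2 = 0 →
        ‖y‖ = ‖z‖) := by
  refine ⟨⟨exists_angle_of_discr_eq_zero hf₀.le,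
    fun ⟨_, hcos, hy, hf⟩ => discr_eq_zero_of_eq_exp_mul_I_mul hcos hy hf⟩, fun h => ?_⟩
  obtain ⟨ψ, -, hy, -⟩ := exists_angle_of_discr_eq_zero hf₀.le h
  rw [hy, norm_mul, norm_exp_ofReal_mul_I, one_mul]

/-- For `z ≠ 0` and `f₀ > 0`, the vanishing of the discriminant
`f₀(y+z)² + (y−z)² = 0` holds iff `y = e^{iψ}z` and `f₀ = tan²(ψ/2)` for some real `ψ`
with `cos(ψ/2) ≠ 0`; in particular it implies `|y| = |z|`. -/
theorem stmt_16 (y z : ℂ) (hz : z ≠ 0) (f₀ : ℝ) (hf₀ : 0 < f₀) :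
    ((f₀ : ℂ) * (y + z) ^ 2 + (y - z) ^ 2 = 0 ↔
      ∃ ψ : ℝ, Real.cos (ψ / 2) ≠ 0 ∧ y = Complex.exp ((ψ : ℂ) * Complex.I) * z ∧
        f₀ = Real.tan (ψ / 2) ^ 2) ∧
      ((f₀ : ℂ) * (y + z) ^ 2 + (y - z) ^ 2 = 0 →
        ‖y‖ = ‖z‖) :=
  stmt_16_general y z f₀ hf₀
end

section
/- Let y, z ∈ ℂ with y + z ≠ 0, and let r₁, r₂ : (0, ∞) → ℂ be functions such that for every f₀ > 0: r₁(f₀)·r₂(f₀) = (1 + f₀)·y·z and r₁(f₀) + r₂(f₀) = (1 + f₀)·(y + z) (i.e. r₁(f₀), r₂(f₀) are the roots of x² − (1+f₀)(y+z)x + (1+f₀)yz = 0). If r₁ is bounded on (0, ∞), then r₁(f₀) → y·z/(y + z) as f₀ → ∞. -/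
/-! Eliminating `r₂` from Vieta's relations gives
`r₁ - yz/(y+z) = r₁² / ((1 + f₀)(y + z))`, and a bounded numerator over a denominator that
grows linearly in `f₀` tends to `0`. -/

open Filter Topology Bornology

theorem eq_div_add_sq_div_of_mul_eq_of_add_eq {K : Type*} [Field K] {r s t y z : K}
    (ht : t ≠ 0) (hyz : y + z ≠ 0) (hmul : r * s = t * y * z) (hadd : r + s = t * (y + z)) :
    r = y * z / (y + z) + r ^ 2 / (t * (y + z)) := by
  have hs : s = t * (y + z) - r := by linear_combination hadd
  rw [hs] at hmul
  rw [div_add_div _ _ hyz (mul_ne_zero ht hyz), eq_div_iff (mul_ne_zero hyz (mul_ne_zero ht hyz))]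
  linear_combination (y + z) * hmul

theorem tendsto_div_of_isBoundedUnder_of_tendsto_cobounded {α 𝕜 : Type*} [NormedField 𝕜]
    {l : Filter α} {g t : α → 𝕜} (hg : IsBoundedUnder (· ≤ ·) l ((‖·‖) ∘ g))
    (ht : Tendsto t l (cobounded 𝕜)) : Tendsto (fun x ↦ g x / t x) l (𝓝 0) := by
  simpa only [div_eq_mul_inv, Function.comp_apply] using
    isBoundedUnder_le_mul_tendsto_zero hg (tendsto_inv₀_cobounded.comp ht)

/-- If for every `f₀ > 0` the values `r₁(f₀), r₂(f₀)` are the two roots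
of `x² − (1+f₀)(y+z)x + (1+f₀)yz = 0` (with `y + z ≠ 0`) and `r₁` is bounded on `(0,∞)`,
then `r₁(f₀) → yz/(y+z)` as `f₀ → ∞`. -/
theorem stmt_17 (y z : ℂ) (hyz : y + z ≠ 0) (r₁ r₂ : ℝ → ℂ)
    (hprod : ∀ f₀ : ℝ, 0 < f₀ → r₁ f₀ * r₂ f₀ = (1 + (f₀ : ℂ)) * y * z)
    (hsum : ∀ f₀ : ℝ, 0 < f₀ → r₁ f₀ + r₂ f₀ = (1 + (f₀ : ℂ)) * (y + z))
    (hbdd : ∃ Cb : ℝ, ∀ f₀ : ℝ, 0 < f₀ → ‖r₁ f₀‖ ≤ Cb) :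
    Filter.Tendsto r₁ Filter.atTop (nhds (y * z / (y + z))) := by
  obtain ⟨C, hC⟩ := hbdd
  have hsq : IsBoundedUnder (· ≤ ·) atTop ((‖·‖) ∘ fun f₀ ↦ r₁ f₀ ^ 2) :=
    isBoundedUnder_of_eventually_le (a := C ^ 2) <| by
      filter_upwards [eventually_gt_atTop 0] with f₀ hf₀
      simpa [norm_pow] using pow_le_pow_left₀ (norm_nonneg _) (hC f₀ hf₀) 2
  have hlin : Tendsto (fun f₀ : ℝ ↦ (1 + (f₀ : ℂ)) * (y + z)) atTop (cobounded ℂ) := by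
    have hcast := (RCLike.tendsto_ofReal_atTop_cobounded ℂ).comp
      (tendsto_atTop_add_const_left _ 1 tendsto_id)
    exact (tendsto_mul_right_cobounded hyz).comp (by simpa [Function.comp_def] using hcast)
  rw [← add_zero (y * z / (y + z))]
  refine ((tendsto_div_of_isBoundedUnder_of_tendsto_cobounded hsq hlin).const_add _).congr' ?_
  filter_upwards [eventually_gt_atTop 0] with f₀ hf₀
  have hne : (1 + (f₀ : ℂ)) ≠ 0 := by exact_mod_cast (by positivity : (1 + f₀) ≠ 0)
  exact (eq_div_add_sq_div_of_mul_eq_of_add_eq hne hyz (hprod f₀ hf₀) (hsum f₀ hf₀)).symm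
end

section
/- Let n ≥ 1, ω ≠ 0, γ ≥ 0, μ₀ ≥ 0 with γ + μ₀ > 0, μ₁ > 0, η₁ > 0, and μⱼ > 0, ηⱼ > 0 for j = 2,…,n. Define, for complex λ ≠ 0 in a punctured neighborhood of 0, J_V(λ) = 1/μ₁ + 1/(λη₁) + Σ_{j=2}^n 1/(μⱼ + ληⱼ) and C(λ) = ω²/(γ + μ₀ + J_V(λ)⁻¹), and set C(0) = ω²/(γ + μ₀). Then C(λ) → C(0) as λ → 0 and lim_{λ→0} (C(λ) − C(0))/λ = −ω²·η₁/(γ + μ₀)², i.e. the characteristic time τ = −C′(0)/C(0) equals η₁/(γ + μ₀). -/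
open Topology

/-! For `λ ≠ 0` one has `λ J_V(λ) = 1/η₁ + λ R(λ)`, where `R`, the compliance of the springs and of
the Kelvin–Voigt elements, is continuous at `0` because every `μⱼ ≠ 0`. Hence
`J_V(λ)⁻¹ = λ (1/η₁ + λ R(λ))⁻¹` extends across `0` to a function vanishing there with derivative
`η₁`, so `C` agrees near `0` with a function differentiable at `0`, of derivative
`-ω² η₁ / (γ + μ₀)²` by the quotient rule. -/

theorem hasDerivAt_sub_mul_of_continuousAt {𝕜 : Type*} [NontriviallyNormedField 𝕜]
    {q : 𝕜 → 𝕜} {x : 𝕜} (hq : ContinuousAt q x) :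
    HasDerivAt (fun y => (y - x) * q y) (q x) x := by
  rw [hasDerivAt_iff_tendsto_slope]
  refine (hq.tendsto.mono_left nhdsWithin_le_nhds).congr' ?_
  filter_upwards [self_mem_nhdsWithin] with y hy
  rw [slope_def_field, sub_self, zero_mul, sub_zero, mul_div_cancel_left₀ _ (sub_ne_zero.mpr hy)]

theorem hasDerivAt_mul_inv_mul_add_inv {𝕜 : Type*} [NontriviallyNormedField 𝕜]
    {R : 𝕜 → 𝕜} (hR : ContinuousAt R 0) {η : 𝕜} (hη : η ≠ 0) :
    HasDerivAt (fun l => l * (l * R l + η⁻¹)⁻¹) η 0 := by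
  have hq : ContinuousAt (fun l => (l * R l + η⁻¹)⁻¹) 0 :=
    ((continuousAt_id.mul hR).add continuousAt_const).inv₀ (by simpa)
  simpa using hasDerivAt_sub_mul_of_continuousAt hq

theorem inv_add_one_div_mul {K : Type*} [Field K] {l : K} (hl : l ≠ 0) (r η : K) :
    (r + 1 / (l * η))⁻¹ = l * (l * r + η⁻¹)⁻¹ := by
  rw [← inv_inv l, ← mul_inv, mul_add, inv_inv, inv_mul_cancel_left₀ hl, one_div, mul_inv]

theorem continuousAt_sum_one_div_add_mul {𝕜 ι : Type*} [NontriviallyNormedField 𝕜]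
    [Fintype ι] {μ η : ι → 𝕜} (hμ : ∀ j, μ j ≠ 0) :
    ContinuousAt (fun l => ∑ j, 1 / (μ j + l * η j)) 0 :=
  tendsto_finsetSum _ fun j _ => continuousAt_const.div (by fun_prop) (by simpa using hμ j)

theorem stmt_19_general (n : ℕ) (ω γ μ₀ μ₁ η₁ : ℝ) (μs ηs : Fin (n - 1) → ℝ)
    (hω : ω ≠ 0) (hγμ₀ : 0 < γ + μ₀)
    (hη₁ : 0 < η₁) (hμs : ∀ j, 0 < μs j)
    (JV C : ℂ → ℂ)
    (hJV : ∀ l : ℂ, l ≠ 0 → JV l =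
      1 / (μ₁ : ℂ) + 1 / (l * (η₁ : ℂ)) + ∑ j, 1 / ((μs j : ℂ) + l * (ηs j : ℂ)))
    (hC : ∀ᶠ l in 𝓝[≠] (0 : ℂ), C l = (ω : ℂ) ^ 2 / ((γ : ℂ) + (μ₀ : ℂ) + (JV l)⁻¹))
    (hC0 : C 0 = (ω : ℂ) ^ 2 / ((γ : ℂ) + (μ₀ : ℂ))) :
    Filter.Tendsto C (𝓝[≠] (0 : ℂ)) (𝓝 (C 0)) ∧
      Filter.Tendsto (fun l => (C l - C 0) / l) (𝓝[≠] (0 : ℂ))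
        (𝓝 (-((ω : ℂ) ^ 2 * (η₁ : ℂ)) / ((γ : ℂ) + (μ₀ : ℂ)) ^ 2)) ∧
      -(-((ω : ℂ) ^ 2 * (η₁ : ℂ)) / ((γ : ℂ) + (μ₀ : ℂ)) ^ 2) / C 0
        = ((η₁ / (γ + μ₀) : ℝ) : ℂ) := by
  have ha : (γ : ℂ) + μ₀ ≠ 0 := by exact_mod_cast hγμ₀.ne'
  set R : ℂ → ℂ := fun l => 1 / (μ₁ : ℂ) + ∑ j, 1 / ((μs j : ℂ) + l * (ηs j : ℂ))
  have hR : ContinuousAt R 0 := continuousAt_const.add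
    (continuousAt_sum_one_div_add_mul fun j => by exact_mod_cast (hμs j).ne')
  have hg := hasDerivAt_mul_inv_mul_add_inv hR (η := (η₁ : ℂ)) (by exact_mod_cast hη₁.ne')
  have hF := (hasDerivAt_const (0 : ℂ) ((ω : ℂ) ^ 2)).div (hg.const_add ((γ : ℂ) + μ₀))
    (by simpa using ha)
  have hCF : C =ᶠ[𝓝 0] fun l => (ω : ℂ) ^ 2 / ((γ : ℂ) + μ₀ + l * (l * R l + (η₁ : ℂ)⁻¹)⁻¹) := by
    refine eventuallyEq_nhds_of_eventuallyEq_nhdsNE ?_ (by simpa using hC0)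
    filter_upwards [hC, self_mem_nhdsWithin] with l hCl hl
    rw [hCl, hJV l hl, add_right_comm (1 / (μ₁ : ℂ)), ← inv_add_one_div_mul hl]
  have hC' : HasDerivAt C (-((ω : ℂ) ^ 2 * η₁) / ((γ : ℂ) + μ₀) ^ 2) 0 := by
    simpa using hF.congr_of_eventuallyEq hCF
  refine ⟨hC'.continuousAt.tendsto.mono_left nhdsWithin_le_nhds, ?_, ?_⟩
  · simpa [slope_fun_def_field] using hC'.tendsto_slope
  · have hω' : (ω : ℂ) ≠ 0 := by exact_mod_cast hω
    rw [hC0]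
    push_cast
    field_simp

/-- For the generalized Voigt rheology with prestress, the
nondimensional complex compliance `C(λ) = ω²/(γ + μ₀ + J_V(λ)⁻¹)` (for `λ ≠ 0` near `0`,
with `C(0) = ω²/(γ+μ₀)`) satisfies `C(λ) → C(0)` as `λ → 0` and
`(C(λ) − C(0))/λ → −ω²η₁/(γ+μ₀)²`, i.e. the characteristic time
`τ = −C′(0)/C(0)` equals `η₁/(γ+μ₀)`. -/
theorem stmt_19 (n : ℕ) (hn : 1 ≤ n) (ω γ μ₀ μ₁ η₁ : ℝ) (μs ηs : Fin (n - 1) → ℝ)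
    (hω : ω ≠ 0) (hγ : 0 ≤ γ) (hμ₀ : 0 ≤ μ₀) (hγμ₀ : 0 < γ + μ₀)
    (hμ₁ : 0 < μ₁) (hη₁ : 0 < η₁) (hμs : ∀ j, 0 < μs j) (hηs : ∀ j, 0 < ηs j)
    (JV C : ℂ → ℂ)
    (hJV : ∀ l : ℂ, l ≠ 0 → JV l =
      1 / (μ₁ : ℂ) + 1 / (l * (η₁ : ℂ)) + ∑ j, 1 / ((μs j : ℂ) + l * (ηs j : ℂ)))
    (hC : ∀ᶠ l in 𝓝[≠] (0 : ℂ), C l = (ω : ℂ) ^ 2 / ((γ : ℂ) + (μ₀ : ℂ) + (JV l)⁻¹))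
    (hC0 : C 0 = (ω : ℂ) ^ 2 / ((γ : ℂ) + (μ₀ : ℂ))) :
    Filter.Tendsto C (𝓝[≠] (0 : ℂ)) (𝓝 (C 0)) ∧
      Filter.Tendsto (fun l => (C l - C 0) / l) (𝓝[≠] (0 : ℂ))
        (𝓝 (-((ω : ℂ) ^ 2 * (η₁ : ℂ)) / ((γ : ℂ) + (μ₀ : ℂ)) ^ 2)) ∧
      -(-((ω : ℂ) ^ 2 * (η₁ : ℂ)) / ((γ : ℂ) + (μ₀ : ℂ)) ^ 2) / C 0
        = ((η₁ / (γ + μ₀) : ℝ) : ℂ) :=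
  stmt_19_general n ω γ μ₀ μ₁ η₁ μs ηs hω hγμ₀ hη₁ hμs JV C hJV hC hC0
end
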